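/- arXiv:1905.02561 — 5 statements merged into one kernel-verified Lean document; each statement's English description precedes it below -/
import Mathlib

section
/- Let (T, I, V) be a solution of the HCV system on an interval [t₀, t₁). If T(t₀) > 0, I(t₀) > 0 and V(t₀) > 0, then T(t) > 0, I(t) > 0 and V(t) > 0 for all t ∈ [t₀, t₁). -/
open Set

/-- `(T, I, V)` is a solution of the HCV system on the set `U`. -/
def hcvSol (s rT rI dT dI Tmax β p q c η ε : ℝ)
    (T I V : ℝ → ℝ) (U : Set ℝ) : Prop :=
  ∀ t ∈ U,
    HasDerivWithinAt T
      (s + rT * T t * (1 - (T t + I t) / Tmax) - dT * T t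
        - (1 - η) * β * V t * T t + q * I t) U t ∧
    HasDerivWithinAt I
      (rI * I t * (1 - (T t + I t) / Tmax) + (1 - η) * β * V t * T t
        - dI * I t - q * I t) U t ∧
    HasDerivWithinAt V ((1 - ε) * p * I t - c * V t) U t

private lemma hcv_neBot {a τ : ℝ} (haτ : a < τ) : (nhdsWithin τ (Ioo a τ)).NeBot := by
  apply mem_closure_iff_nhdsWithin_neBot.1
  rw [closure_Ioo haτ.ne]
  exact right_mem_Icc.2 haτ.le

/-- If `f` is positive on `(a, τ)`, vanishes at `τ`, and has a derivative at `τ`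
from the left, that derivative cannot be positive. -/
private lemma hcv_no_drop {f : ℝ → ℝ} {a τ d : ℝ} (haτ : a < τ)
    (hf : HasDerivWithinAt f d (Ioo a τ) τ)
    (hpos : ∀ t ∈ Ioo a τ, 0 < f t) (hfτ : f τ = 0) (hd : 0 < d) : False := by
  have hne := hcv_neBot haτ
  have htend := hasDerivWithinAt_iff_tendsto_slope.1 hf
  rw [Set.diff_singleton_eq_self (by simp)] at htend
  have hle : d ≤ 0 := by
    refine le_of_tendsto htend ?_
    filter_upwards [self_mem_nhdsWithin] with x hx
    have hx1 : 0 < f x := hpos x hx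
    have hx2 : x - τ ≤ 0 := by linarith [hx.2]
    rw [slope_def_field]
    exact div_nonpos_of_nonneg_of_nonpos (by rw [hfτ]; linarith) hx2
  linarith

/-- A function nonnegative on `(a, τ)` and continuous at `τ` from within `(a, τ)`
is nonnegative at `τ`. -/
private lemma hcv_nonneg_at {f : ℝ → ℝ} {a τ : ℝ} (haτ : a < τ)
    (hc : ContinuousWithinAt f (Ioo a τ) τ)
    (hpos : ∀ t ∈ Ioo a τ, 0 ≤ f t) : 0 ≤ f τ := by
  have hne := hcv_neBot haτ
  exact ge_of_tendsto hc (by filter_upwards [self_mem_nhdsWithin] with x hx using hpos x hx)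

/-- Grönwall-type positivity: if `W' ≥ -K·W` on `[a, b]` and `W a > 0` then `W b > 0`. -/
private lemma hcv_gronwall_pos {W d : ℝ → ℝ} {a b K : ℝ} (hab : a ≤ b)
    (hW : ∀ t ∈ Icc a b, HasDerivWithinAt W (d t) (Icc a b) t)
    (hd : ∀ t ∈ Icc a b, -(K * W t) ≤ d t)
    (hW0 : 0 < W a) : 0 < W b := by
  set g : ℝ → ℝ := fun t => W t * Real.exp (K * t) with hgdef
  have hexp : ∀ t : ℝ, HasDerivAt (fun u => Real.exp (K * u)) (Real.exp (K * t) * K) t := by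
    intro t
    simpa using (((hasDerivAt_id t).const_mul K).exp)
  have hmono : MonotoneOn g (Icc a b) := by
    apply monotoneOn_of_hasDerivWithinAt_nonneg (convex_Icc a b)
      (f' := fun t => d t * Real.exp (K * t) + W t * (Real.exp (K * t) * K))
    · exact fun t ht =>
        ((hW t ht).continuousWithinAt).mul (Real.continuous_exp.comp
          (continuous_const.mul continuous_id)).continuousWithinAt
    · intro t ht
      rw [interior_Icc] at ht ⊢
      exact ((hW t (Ioo_subset_Icc_self ht)).mono Ioo_subset_Icc_self).mul
        ((hexp t).hasDerivWithinAt)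
    · intro t ht
      rw [interior_Icc] at ht
      have h1 := hd t (Ioo_subset_Icc_self ht)
      have h2 := Real.exp_pos (K * t)
      nlinarith
  have hga : 0 < g a := mul_pos hW0 (Real.exp_pos _)
  have hgab : g a ≤ g b := hmono (left_mem_Icc.2 hab) (right_mem_Icc.2 hab) hab
  have h2 := Real.exp_pos (K * b)
  have h3 : 0 < W b * Real.exp (K * b) := lt_of_lt_of_le hga hgab
  by_contra h
  push_neg at h
  nlinarith [mul_nonpos_of_nonpos_of_nonneg h h2.le]

set_option maxHeartbeats 1000000 in
/-- Positivity of solutions of the HCV system with positive initial data. -/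
theorem hcv_positivity
    (s rT rI dT dI Tmax β p q c η ε : ℝ)
    (hs : 0 < s) (hrT : 0 < rT) (hrI : 0 < rI) (hdT : 0 < dT) (hdI : 0 < dI)
    (hTmax : 0 < Tmax) (hβ : 0 < β) (hp : 0 < p) (hq : 0 < q) (hc : 0 < c)
    (hη : η ∈ Set.Ico (0 : ℝ) 1) (hε : ε ∈ Set.Ico (0 : ℝ) 1)
    (hrIT : rI ≤ rT) (hsT : s ≤ dT * Tmax) (hdTI : dT ≤ dI)
    (t₀ t₁ : ℝ) (T I V : ℝ → ℝ)
    (hsol : hcvSol s rT rI dT dI Tmax β p q c η ε T I V (Ico t₀ t₁))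
    (hT0 : 0 < T t₀) (hI0 : 0 < I t₀) (hV0 : 0 < V t₀) :
    ∀ t ∈ Ico t₀ t₁, 0 < T t ∧ 0 < I t ∧ 0 < V t := by
  by_contra hcon
  push_neg at hcon
  obtain ⟨b, hb, hbad⟩ := hcon
  -- continuity of the solution
  have hTc : ContinuousOn T (Ico t₀ t₁) := fun t ht => ((hsol t ht).1).continuousWithinAt
  have hIc : ContinuousOn I (Ico t₀ t₁) := fun t ht => ((hsol t ht).2.1).continuousWithinAt
  have hVc : ContinuousOn V (Ico t₀ t₁) := fun t ht => ((hsol t ht).2.2).continuousWithinAt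
  set g : ℝ → ℝ := fun t => min (T t) (min (I t) (V t)) with hgdef
  have hgb : g b ≤ 0 := by
    rcases le_or_gt (T b) 0 with h | h
    · exact le_trans (min_le_left _ _) h
    rcases le_or_gt (I b) 0 with h' | h'
    · exact le_trans (min_le_right _ _) (le_trans (min_le_left _ _) h')
    · exact le_trans (min_le_right _ _) (le_trans (min_le_right _ _) (hbad h h'))
  have hgc : ContinuousOn g (Ico t₀ t₁) := fun t ht => (hTc t ht).min ((hIc t ht).min (hVc t ht))
  have hIccb : Icc t₀ b ⊆ Ico t₀ t₁ := fun x hx => ⟨hx.1, lt_of_le_of_lt hx.2 hb.2⟩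
  set S : Set ℝ := Icc t₀ b ∩ g ⁻¹' (Iic 0) with hSdef
  have hScl : IsClosed S :=
    (hgc.mono hIccb).preimage_isClosed_of_isClosed isClosed_Icc isClosed_Iic
  have hbS : b ∈ S := ⟨right_mem_Icc.2 hb.1, hgb⟩
  have hSbdd : BddBelow S := (bddBelow_Icc).mono inter_subset_left
  set τ : ℝ := sInf S with hτdef
  have hτS : τ ∈ S := hScl.csInf_mem ⟨b, hbS⟩ hSbdd
  have hτIcc : τ ∈ Icc t₀ b := hτS.1
  have hgτ : g τ ≤ 0 := hτS.2
  have hτt1 : τ < t₁ := lt_of_le_of_lt hτIcc.2 hb.2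
  have hτmem : τ ∈ Ico t₀ t₁ := ⟨hτIcc.1, hτt1⟩
  have hposIco : ∀ t ∈ Ico t₀ τ, 0 < g t := by
    intro t ht
    by_contra h
    push_neg at h
    have htS : t ∈ S := ⟨⟨ht.1, le_trans ht.2.le hτIcc.2⟩, h⟩
    exact absurd (csInf_le hSbdd htS) (not_le.2 ht.2)
  have hgt0 : 0 < g t₀ := lt_min hT0 (lt_min hI0 hV0)
  have ht0τ : t₀ < τ := by
    rcases lt_or_eq_of_le hτIcc.1 with h | h
    · exact h
    · rw [← h] at hgτ; linarith
  have hIooSub : Ioo t₀ τ ⊆ Ico t₀ t₁ := fun x hx => ⟨hx.1.le, lt_trans hx.2 hτt1⟩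
  have hIccSub : Icc t₀ τ ⊆ Ico t₀ t₁ := fun x hx => ⟨hx.1, lt_of_le_of_lt hx.2 hτt1⟩
  -- componentwise positivity on [t₀, τ)
  have hTpos : ∀ t ∈ Ico t₀ τ, 0 < T t := fun t ht =>
    lt_of_lt_of_le (hposIco t ht) (min_le_left _ _)
  have hIpos : ∀ t ∈ Ico t₀ τ, 0 < I t := fun t ht =>
    lt_of_lt_of_le (hposIco t ht) (le_trans (min_le_right _ _) (min_le_left _ _))
  have hVpos : ∀ t ∈ Ico t₀ τ, 0 < V t := fun t ht =>
    lt_of_lt_of_le (hposIco t ht) (le_trans (min_le_right _ _) (min_le_right _ _))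
  -- nonnegativity at τ
  have hTτ : 0 ≤ T τ := hcv_nonneg_at ht0τ ((hTc τ hτmem).mono hIooSub)
    (fun t ht => (hTpos t ⟨ht.1.le, ht.2⟩).le)
  have hIτ : 0 ≤ I τ := hcv_nonneg_at ht0τ ((hIc τ hτmem).mono hIooSub)
    (fun t ht => (hIpos t ⟨ht.1.le, ht.2⟩).le)
  have hVτ : 0 ≤ V τ := hcv_nonneg_at ht0τ ((hVc τ hτmem).mono hIooSub)
    (fun t ht => (hVpos t ⟨ht.1.le, ht.2⟩).le)
  have hcases : T τ = 0 ∨ I τ = 0 ∨ V τ = 0 := by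
    by_contra h
    push_neg at h
    have h1 : 0 < T τ := lt_of_le_of_ne hTτ (Ne.symm h.1)
    have h2 : 0 < I τ := lt_of_le_of_ne hIτ (Ne.symm h.2.1)
    have h3 : 0 < V τ := lt_of_le_of_ne hVτ (Ne.symm h.2.2)
    have : 0 < g τ := lt_min h1 (lt_min h2 h3)
    linarith
  -- nonnegativity on [t₀, τ]
  have hTnn : ∀ t ∈ Icc t₀ τ, 0 ≤ T t := by
    intro t ht
    rcases lt_or_eq_of_le ht.2 with h | h
    · exact (hTpos t ⟨ht.1, h⟩).le
    · rw [h]; exact hTτ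
  have hInn : ∀ t ∈ Icc t₀ τ, 0 ≤ I t := by
    intro t ht
    rcases lt_or_eq_of_le ht.2 with h | h
    · exact (hIpos t ⟨ht.1, h⟩).le
    · rw [h]; exact hIτ
  have hVnn : ∀ t ∈ Icc t₀ τ, 0 ≤ V t := by
    intro t ht
    rcases lt_or_eq_of_le ht.2 with h | h
    · exact (hVpos t ⟨ht.1, h⟩).le
    · rw [h]; exact hVτ
  -- a bound on the logistic factor on [t₀, τ]
  obtain ⟨C, hC⟩ := (isCompact_Icc (a := t₀) (b := τ)).exists_bound_of_continuousOn
    (f := fun t => 1 - (T t + I t) / Tmax)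
    ((continuousOn_const.sub (((hTc.mono hIccSub).add (hIc.mono hIccSub)).div_const _)))
  -- Grönwall: I + V stays positive up to τ
  have hWτ : 0 < I τ + V τ := by
    refine hcv_gronwall_pos (W := fun u => I u + V u)
      (d := fun t => (rI * I t * (1 - (T t + I t) / Tmax) + (1 - η) * β * V t * T t
        - dI * I t - q * I t) + ((1 - ε) * p * I t - c * V t))
      (K := rI * C + dI + q + c) ht0τ.le ?_ ?_ (by show (0:ℝ) < I t₀ + V t₀; linarith)
    · intro t ht
      exact ((hsol t (hIccSub ht)).2.1.mono hIccSub).add ((hsol t (hIccSub ht)).2.2.mono hIccSub)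
    · intro t ht
      have hx := hC t ht
      rw [Real.norm_eq_abs, abs_le] at hx
      obtain ⟨hxl, hxr⟩ := hx
      have h1 := hTnn t ht
      have h2 := hInn t ht
      have h3 := hVnn t ht
      have h1η : (0:ℝ) < 1 - η := by linarith [hη.2]
      have h1ε : (0:ℝ) < 1 - ε := by linarith [hε.2]
      nlinarith [mul_nonneg (mul_nonneg hrI.le h2) (by linarith : (0:ℝ) ≤ 1 - (T t + I t) / Tmax + C),
        mul_nonneg (mul_nonneg (mul_nonneg h1η.le hβ.le) h3) h1,
        mul_nonneg (mul_nonneg h1ε.le hp.le) h2,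
        mul_nonneg (mul_nonneg hrI.le (by linarith [abs_nonneg (1 - (T t + I t) / Tmax)] : (0:ℝ) ≤ C)) h3,
        mul_nonneg hdI.le h3, mul_nonneg hq.le h3, mul_nonneg hc.le h2]
  -- derivatives within (t₀, τ) at τ
  obtain ⟨hdT', hdI', hdV'⟩ := hsol τ hτmem
  have hIoopos : ∀ t ∈ Ioo t₀ τ, t ∈ Ico t₀ τ := fun t ht => ⟨ht.1.le, ht.2⟩
  rcases hTτ.eq_or_lt with h | hTτpos
  · -- T τ = 0: derivative is s + q I τ > 0, contradiction
    refine hcv_no_drop ht0τ (hdT'.mono hIooSub)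
      (fun t ht => hTpos t (hIoopos t ht)) h.symm ?_
    rw [← h]
    nlinarith [mul_nonneg hq.le hIτ]
  rcases hIτ.eq_or_lt with h | hIτpos
  · -- I τ = 0: then V τ > 0 and derivative is (1-η) β V T > 0
    have hVτpos : 0 < V τ := by rw [← h] at hWτ; linarith
    have h1η : (0:ℝ) < 1 - η := by linarith [hη.2]
    refine hcv_no_drop ht0τ (hdI'.mono hIooSub)
      (fun t ht => hIpos t (hIoopos t ht)) h.symm ?_
    rw [← h]
    nlinarith [mul_pos (mul_pos (mul_pos h1η hβ) hVτpos) hTτpos]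
  -- V τ = 0: derivative is (1-ε) p I τ > 0
  rcases hcases with h | h | h
  · linarith
  · linarith
  · have h1ε : (0:ℝ) < 1 - ε := by linarith [hε.2]
    refine hcv_no_drop ht0τ (hdV'.mono hIooSub)
      (fun t ht => hVpos t (hIoopos t ht)) h ?_
    rw [h]
    have hh := mul_pos (mul_pos h1ε hp) hIτpos
    linarith
end

section
/- Let (T, I, V) be a solution of the HCV system on [t₀, ∞) with T(t) > 0, I(t) > 0, V(t) > 0 for all t ≥ t₀. Then for all t ≥ t₀ one has T(t) + I(t) ≤ max{T(t₀) + I(t₀), T̃₀} and V(t) ≤ max{V(t₀), ((1-ε)·p/c)·max{T(t₀) + I(t₀), T̃₀}}; in particular T(t) ≤ max{T(t₀)+I(t₀), T̃₀} and I(t) ≤ max{T(t₀)+I(t₀), T̃₀}. -/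
open Set

/-- The constant `T̃₀` bounding the total hepatocyte population. -/
noncomputable def hcvTtilde (s rT rI dT Tmax : ℝ) : ℝ :=
  Tmax / (2 * rI) * (Real.sqrt ((rT - dT) ^ 2 + 4 * s * rI / Tmax) + rT - dT)

/-- Barrier lemma: if `f' t < 0` whenever `f t > K`, then `f` stays `≤ K`. -/
lemma hcv_barrier {f f' : ℝ → ℝ} {t₀ K : ℝ}
    (hf : ∀ t ∈ Ici t₀, HasDerivWithinAt f (f' t) (Ici t₀) t)
    (hK : f t₀ ≤ K)
    (hd : ∀ t ∈ Ici t₀, K < f t → f' t < 0) :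
    ∀ t ∈ Ici t₀, f t ≤ K := by
  intro t ht
  refine le_of_forall_pos_le_add fun δ hδ => ?_
  have hsub : Icc t₀ t ⊆ Ici t₀ := Icc_subset_Ici_self
  have hcont : ContinuousOn f (Icc t₀ t) := fun x hx =>
    ((hf x (hsub hx)).continuousWithinAt).mono hsub
  have hder : ∀ x ∈ Ico t₀ t, HasDerivWithinAt f (f' x) (Ici x) x := fun x hx =>
    (hf x hx.1).mono (Ici_subset_Ici.2 hx.1)
  have := image_le_of_deriv_right_lt_deriv_boundary' (B := fun _ => K + δ)
    (B' := fun _ => 0) hcont hder (show f t₀ ≤ K + δ by linarith) continuousOn_const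
    (fun x _ => hasDerivWithinAt_const x _ _)
    (fun x hx hfx => hd x hx.1 (by have h : f x = K + δ := hfx; linarith))
  exact this (right_mem_Icc.2 ht)

lemma hcv_sqrt_gt {s rT rI dT Tmax : ℝ} (hs : 0 < s) (hrI : 0 < rI)
    (hTmax : 0 < Tmax) :
    |rT - dT| < Real.sqrt ((rT - dT) ^ 2 + 4 * s * rI / Tmax) := by
  have h1 : 0 < 4 * s * rI / Tmax := by positivity
  rw [← Real.sqrt_sq_eq_abs]
  exact Real.sqrt_lt_sqrt (sq_nonneg _) (by linarith)

lemma hcv_Ttilde_pos {s rT rI dT Tmax : ℝ} (hs : 0 < s) (hrI : 0 < rI)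
    (hTmax : 0 < Tmax) :
    0 < hcvTtilde s rT rI dT Tmax := by
  have h3 := hcv_sqrt_gt (rT := rT) (dT := dT) hs hrI hTmax
  have := abs_lt.1 h3
  have h4 : 0 < Real.sqrt ((rT - dT) ^ 2 + 4 * s * rI / Tmax) + rT - dT := by
    linarith [this.1]
  unfold hcvTtilde
  positivity

lemma hcv_quad_neg {s rT rI dT Tmax x : ℝ} (hs : 0 < s) (hrI : 0 < rI)
    (hTmax : 0 < Tmax) (hx : hcvTtilde s rT rI dT Tmax < x) :
    (rT - dT) * Tmax * x + s * Tmax < rI * x ^ 2 := by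
  set D := Real.sqrt ((rT - dT) ^ 2 + 4 * s * rI / Tmax) with hD
  have hD0 : 0 ≤ D := Real.sqrt_nonneg _
  have hD2 : D ^ 2 = (rT - dT) ^ 2 + 4 * s * rI / Tmax := by
    rw [hD, Real.sq_sqrt]; positivity
  have hTD : Tmax * D ^ 2 = Tmax * (rT - dT) ^ 2 + 4 * s * rI := by
    rw [hD2]; field_simp
  have hΘpos := hcv_Ttilde_pos (rT := rT) (dT := dT) hs hrI hTmax
  have hΘ : 2 * rI * hcvTtilde s rT rI dT Tmax = Tmax * (D + rT - dT) := by
    unfold hcvTtilde; rw [← hD]; field_simp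
  have hDgt := abs_lt.1 (hcv_sqrt_gt (rT := rT) (dT := dT) hs hrI hTmax)
  rw [← hD] at hDgt
  have hxpos : 0 < x := lt_trans hΘpos hx
  have h1 : 0 < 2 * rI * x - Tmax * (D + rT - dT) := by
    have := mul_lt_mul_of_pos_left hx (by positivity : (0:ℝ) < 2 * rI)
    linarith [hΘ]
  have h2 : 0 < 2 * rI * x - Tmax * (rT - dT - D) := by
    have : Tmax * (rT - dT - D) < 0 := by
      apply mul_neg_of_pos_of_neg hTmax; linarith [hDgt.1]
    nlinarith
  have hfac : 4 * rI * (rI * x ^ 2 - (rT - dT) * Tmax * x - s * Tmax)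
      = (2 * rI * x - Tmax * (D + rT - dT)) * (2 * rI * x - Tmax * (rT - dT - D)) := by
    linear_combination Tmax * hTD
  nlinarith [mul_pos h1 h2]

/-- Asymptotic bounds for positive solutions of the HCV system. -/
theorem hcv_asymptotic_bounds
    (s rT rI dT dI Tmax β p q c η ε : ℝ)
    (hs : 0 < s) (hrT : 0 < rT) (hrI : 0 < rI) (hdT : 0 < dT) (hdI : 0 < dI)
    (hTmax : 0 < Tmax) (hβ : 0 < β) (hp : 0 < p) (hq : 0 < q) (hc : 0 < c)
    (hη : η ∈ Set.Ico (0 : ℝ) 1) (hε : ε ∈ Set.Ico (0 : ℝ) 1)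
    (hrIT : rI ≤ rT) (hsT : s ≤ dT * Tmax) (hdTI : dT ≤ dI)
    (t₀ : ℝ) (T I V : ℝ → ℝ)
    (hsol : hcvSol s rT rI dT dI Tmax β p q c η ε T I V (Ici t₀))
    (hpos : ∀ t ∈ Ici t₀, 0 < T t ∧ 0 < I t ∧ 0 < V t) :
    ∀ t ∈ Ici t₀,
      T t + I t ≤ max (T t₀ + I t₀) (hcvTtilde s rT rI dT Tmax) ∧
      V t ≤ max (V t₀)
        ((1 - ε) * p / c * max (T t₀ + I t₀) (hcvTtilde s rT rI dT Tmax)) ∧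
      T t ≤ max (T t₀ + I t₀) (hcvTtilde s rT rI dT Tmax) ∧
      I t ≤ max (T t₀ + I t₀) (hcvTtilde s rT rI dT Tmax) := by

  set Θ := hcvTtilde s rT rI dT Tmax with hΘdef
  set K := max (T t₀ + I t₀) Θ with hKdef
  have hε1 : 0 < 1 - ε := by linarith [hε.2]
  -- derivative of N = T + I
  have hNder : ∀ t ∈ Ici t₀, HasDerivWithinAt (fun u => T u + I u)
      ((s + rT * T t * (1 - (T t + I t) / Tmax) - dT * T t
          - (1 - η) * β * V t * T t + q * I t)
        + (rI * I t * (1 - (T t + I t) / Tmax) + (1 - η) * β * V t * T t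
          - dI * I t - q * I t)) (Ici t₀) t :=
    fun t ht => ((hsol t ht).1).add (hsol t ht).2.1
  have hN : ∀ t ∈ Ici t₀, T t + I t ≤ K := by
    apply hcv_barrier hNder (le_max_left _ _)
    intro t ht hKlt
    obtain ⟨hT, hI, hV⟩ := hpos t ht
    have hΘlt : Θ < T t + I t := lt_of_le_of_lt (le_max_right _ _) hKlt
    have hquad := hcv_quad_neg hs hrI hTmax hΘlt
    have hxpos : 0 < T t + I t := by positivity
    have hTm : Tmax ≠ 0 := ne_of_gt hTmax
    rw [show (s + rT * T t * (1 - (T t + I t) / Tmax) - dT * T t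
          - (1 - η) * β * V t * T t + q * I t)
        + (rI * I t * (1 - (T t + I t) / Tmax) + (1 - η) * β * V t * T t
          - dI * I t - q * I t)
        = (s * Tmax + (Tmax - (T t + I t)) * (rT * T t + rI * I t)
            - dT * T t * Tmax - dI * I t * Tmax) / Tmax by field_simp; ring]
    apply div_neg_of_neg_of_pos _ hTmax
    rcases le_or_gt 0 (Tmax - (T t + I t)) with hc1 | hc1
    · nlinarith [mul_nonneg hc1 (mul_nonneg (sub_nonneg.2 hrIT) hI.le),
        mul_nonneg (mul_nonneg (sub_nonneg.2 hdTI) hI.le) hTmax.le,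
        mul_nonneg (sub_nonneg.2 hrIT) (sq_nonneg (T t + I t))]
    · nlinarith [mul_nonneg (mul_nonneg (sub_nonneg.2 hrIT) hT.le) (le_of_lt (neg_pos.2 hc1)),
        mul_nonneg (mul_nonneg (sub_nonneg.2 hdTI) hI.le) hTmax.le,
        mul_nonneg (mul_nonneg (sub_nonneg.2 hrIT) hxpos.le) hTmax.le]
  have hKpos : 0 < K := lt_of_lt_of_le (hcv_Ttilde_pos hs hrI hTmax) (le_max_right _ _)
  set M := max (V t₀) ((1 - ε) * p / c * K) with hMdef
  have hV : ∀ t ∈ Ici t₀, V t ≤ M := by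
    apply hcv_barrier (f' := fun t => (1 - ε) * p * I t - c * V t)
      (fun t ht => (hsol t ht).2.2) (le_max_left _ _)
    intro t ht hMlt
    obtain ⟨hT, hI, _⟩ := hpos t ht
    have hIK : I t ≤ K := le_trans (by linarith) (hN t ht)
    have h1 : (1 - ε) * p * I t ≤ (1 - ε) * p * K :=
      mul_le_mul_of_nonneg_left hIK (by positivity)
    have h3 : (1 - ε) * p / c * K ≤ M := le_max_right _ _
    have h4 : (1 - ε) * p * K ≤ c * M := by
      have := mul_le_mul_of_nonneg_left h3 hc.le
      rw [show c * ((1 - ε) * p / c * K) = (1 - ε) * p * K by field_simp] at this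
      linarith
    have h5 : c * M < c * V t := mul_lt_mul_of_pos_left hMlt hc
    linarith
  intro t ht
  obtain ⟨hT, hI, _⟩ := hpos t ht
  exact ⟨hN t ht, hV t ht, le_trans (by linarith) (hN t ht),
    le_trans (by linarith) (hN t ht)⟩
end

section
/- If T(t₀) + I(t₀) ≤ T̃₀ and V(t₀) ≤ λ₀, where λ₀ = max{V(t₀), (1-ε)·p·T̃₀/c}, then any solution (T, I, V) of the HCV system on [t₀, ∞) with positive values satisfies T(t) + I(t) ≤ T̃₀ and V(t) ≤ λ₀ for all t ≥ t₀; that is, the set Ω = {(T, I, V) : 0 < T + I ≤ T̃₀, 0 < V ≤ λ₀} is positively invariant for the system. -/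
open Set

/-!
The total population `N = T + I` satisfies `N' ≤ s + (r_T - d_T) N - r_I N² / T_max`, whose
right-hand side has `T̃₀` as its positive root and is negative beyond it, so `N` can never cross
the level `T̃₀`. Then `I ≤ T̃₀`, so `V' = (1-ε) p I - c V < 0` as soon as `V > λ₀ ≥ (1-ε) p T̃₀ / c`,
and `V` cannot cross `λ₀` either.
-/

theorem forall_le_of_hasDerivWithinAt_neg_above {f f' : ℝ → ℝ} {a B : ℝ}
    (hf : ∀ x ∈ Ici a, HasDerivWithinAt f (f' x) (Ici a) x) (ha : f a ≤ B)
    (hneg : ∀ x ∈ Ici a, B < f x → f' x < 0) :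
    ∀ x ∈ Ici a, f x ≤ B := by
  intro b hb
  refine le_of_forall_pos_le_add fun e he => ?_
  have hcont : ContinuousOn f (Icc a b) := fun x hx =>
    (hf x hx.1).continuousWithinAt.mono Icc_subset_Ici_self
  refine image_le_of_deriv_right_lt_deriv_boundary (B := fun _ => B + e) (B' := fun _ => 0)
    hcont (fun x hx => (hf x hx.1).mono (Ici_subset_Ici.2 hx.1)) (by linarith)
    (fun x => hasDerivAt_const x _) (fun x hx hfx => hneg x hx.1 ?_) (right_mem_Icc.2 hb)
  linarith

theorem quadratic_neg_of_root_lt {a b s x : ℝ} (ha : 0 < a) (hs : 0 ≤ s)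
    (hx : (√(b ^ 2 + 4 * a * s) + b) / (2 * a) < x) :
    s + b * x - a * x ^ 2 < 0 := by
  set u := √(b ^ 2 + 4 * a * s)
  have hu : 0 ≤ u := Real.sqrt_nonneg _
  have hu2 : u ^ 2 = b ^ 2 + 4 * a * s := Real.sq_sqrt (by positivity)
  have hgt : 0 < x - (u + b) / (2 * a) := sub_pos.2 hx
  have hgt' : 0 < x - (b - u) / (2 * a) :=
    hgt.trans_le (sub_le_sub_left (div_le_div_of_nonneg_right (by linarith) (by positivity)) _)
  have hfactor :
      s + b * x - a * x ^ 2 = -a * ((x - (u + b) / (2 * a)) * (x - (b - u) / (2 * a))) := by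
    field_simp
    linear_combination (-1 : ℝ) * hu2
  rw [hfactor]
  exact mul_neg_of_neg_of_pos (neg_lt_zero.2 ha) (mul_pos hgt hgt')

theorem hcvTtilde_eq_root (s rT rI dT Tmax : ℝ) (hrI : 0 < rI) (hTmax : 0 < Tmax) :
    hcvTtilde s rT rI dT Tmax
      = (√((rT - dT) ^ 2 + 4 * (rI / Tmax) * s) + (rT - dT)) / (2 * (rI / Tmax)) := by
  rw [hcvTtilde, show 4 * (rI / Tmax) * s = 4 * s * rI / Tmax by ring]
  field_simp
  ring

theorem hcv_total_rate_le {s rT rI dT dI Tmax β q η T I V : ℝ}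
    (hTmax : 0 < Tmax) (hrIT : rI ≤ rT) (hdTI : dT ≤ dI) (hT : 0 ≤ T) (hI : 0 ≤ I) :
    (s + rT * T * (1 - (T + I) / Tmax) - dT * T - (1 - η) * β * V * T + q * I)
      + (rI * I * (1 - (T + I) / Tmax) + (1 - η) * β * V * T - dI * I - q * I)
      ≤ s + (rT - dT) * (T + I) - rI / Tmax * (T + I) ^ 2 := by
  have hgap : s + (rT - dT) * (T + I) - rI / Tmax * (T + I) ^ 2
      - ((s + rT * T * (1 - (T + I) / Tmax) - dT * T - (1 - η) * β * V * T + q * I)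
        + (rI * I * (1 - (T + I) / Tmax) + (1 - η) * β * V * T - dI * I - q * I))
      = (rT - rI) * I + (dI - dT) * I + (rT - rI) * (T + I) * T / Tmax := by
    field_simp
    ring
  have : 0 ≤ (rT - rI) * (T + I) * T / Tmax := by
    have := sub_nonneg.2 hrIT
    positivity
  linarith [mul_nonneg (sub_nonneg.2 hrIT) hI, mul_nonneg (sub_nonneg.2 hdTI) hI]

theorem hcv_invariant_set_general
    (s rT rI dT dI Tmax β p q c η ε : ℝ)
    (hs : 0 < s) (hrI : 0 < rI)
    (hTmax : 0 < Tmax) (hp : 0 < p) (hc : 0 < c)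
    (hε : ε ∈ Set.Ico (0 : ℝ) 1)
    (hrIT : rI ≤ rT) (hdTI : dT ≤ dI)
    (t₀ : ℝ) (T I V : ℝ → ℝ)
    (hsol : hcvSol s rT rI dT dI Tmax β p q c η ε T I V (Ici t₀))
    (hpos : ∀ t ∈ Ici t₀, 0 < T t ∧ 0 < I t ∧ 0 < V t)
    (hTI₀ : T t₀ + I t₀ ≤ hcvTtilde s rT rI dT Tmax) :
    ∀ t ∈ Ici t₀,
      T t + I t ≤ hcvTtilde s rT rI dT Tmax ∧
      V t ≤ max (V t₀) ((1 - ε) * p * hcvTtilde s rT rI dT Tmax / c) := by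
  set Tt := hcvTtilde s rT rI dT Tmax with hTt
  have hN : ∀ t ∈ Ici t₀, T t + I t ≤ Tt :=
    forall_le_of_hasDerivWithinAt_neg_above (fun x hx => (hsol x hx).1.add (hsol x hx).2.1) hTI₀
      fun x hx hgt =>
        (hcv_total_rate_le hTmax hrIT hdTI (hpos x hx).1.le (hpos x hx).2.1.le).trans_lt
        (quadratic_neg_of_root_lt (by positivity) hs.le
          (by rwa [hTt, hcvTtilde_eq_root s rT rI dT Tmax hrI hTmax] at hgt))
  have hV : ∀ t ∈ Ici t₀, V t ≤ max (V t₀) ((1 - ε) * p * Tt / c) := by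
    refine forall_le_of_hasDerivWithinAt_neg_above (fun x hx => (hsol x hx).2.2)
      (le_max_left _ _) fun x hx hgt => ?_
    have hI : I x ≤ Tt := by linarith [hN x hx, (hpos x hx).1]
    have hcap : (1 - ε) * p * Tt ≤ c * max (V t₀) ((1 - ε) * p * Tt / c) :=
      (div_le_iff₀' hc).1 (le_max_right _ _)
    have : 0 ≤ (1 - ε) * p := mul_nonneg (by linarith [hε.2]) hp.le
    nlinarith [mul_le_mul_of_nonneg_left hI this]
  exact fun t ht => ⟨hN t ht, hV t ht⟩

/-- The set `Ω = {(T,I,V) : 0 < T + I ≤ T̃₀, 0 < V ≤ λ₀}` is positively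
invariant for the HCV system. -/
theorem hcv_invariant_set
    (s rT rI dT dI Tmax β p q c η ε : ℝ)
    (hs : 0 < s) (hrT : 0 < rT) (hrI : 0 < rI) (hdT : 0 < dT) (hdI : 0 < dI)
    (hTmax : 0 < Tmax) (hβ : 0 < β) (hp : 0 < p) (hq : 0 < q) (hc : 0 < c)
    (hη : η ∈ Set.Ico (0 : ℝ) 1) (hε : ε ∈ Set.Ico (0 : ℝ) 1)
    (hrIT : rI ≤ rT) (hsT : s ≤ dT * Tmax) (hdTI : dT ≤ dI)
    (t₀ : ℝ) (T I V : ℝ → ℝ)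
    (hsol : hcvSol s rT rI dT dI Tmax β p q c η ε T I V (Ici t₀))
    (hpos : ∀ t ∈ Ici t₀, 0 < T t ∧ 0 < I t ∧ 0 < V t)
    (hTI₀ : T t₀ + I t₀ ≤ hcvTtilde s rT rI dT Tmax)
    (hV₀ : V t₀ ≤ max (V t₀) ((1 - ε) * p * hcvTtilde s rT rI dT Tmax / c)) :
    ∀ t ∈ Ici t₀,
      T t + I t ≤ hcvTtilde s rT rI dT Tmax ∧
      V t ≤ max (V t₀) ((1 - ε) * p * hcvTtilde s rT rI dT Tmax / c) :=
  hcv_invariant_set_general s rT rI dT dI Tmax β p q c η ε hs hrI hTmax hp hc hε hrIT hdTI t₀ T I V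
    hsol hpos hTI₀
end

section
/- If s + q·(T_max/r_I)·(r_I - δ) > 0, then the quadratic polynomial h₂ has exactly one positive real root. -/
open Set

noncomputable def hcvH2 (s rT rI dT dI Tmax β p q c η ε : ℝ) (T : ℝ) : ℝ :=
  s + q * (Tmax / rI) * (rI - (dI + q))
    + (rT - (dT + q) - (rT / rI) * (rI - (dI + q))
        - ((1 - ε) * (1 - η) * β * p * Tmax / c / rI) * (rI - (dI + q))
        + ((1 - ε) * (1 - η) * β * p * Tmax / c) * q / rI) * T
    - (rT / Tmax) * (((1 - ε) * (1 - η) * β * p * Tmax / c) ^ 2 / (rI * rT)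
        + ((1 - ε) * (1 - η) * β * p * Tmax / c) / rI
        - ((1 - ε) * (1 - η) * β * p * Tmax / c) / rT) * T ^ 2


lemma quad_unique_pos (a b c : ℝ) (ha : a < 0) (hc : 0 < c) :
    ∃! x : ℝ, 0 < x ∧ a * x ^ 2 + b * x + c = 0 := by
  have hD : 0 < b ^ 2 - 4 * a * c := by nlinarith
  set r := Real.sqrt (b ^ 2 - 4 * a * c) with hrdef
  have hr2 : r ^ 2 = b ^ 2 - 4 * a * c := Real.sq_sqrt hD.le
  have hr0 : 0 ≤ r := Real.sqrt_nonneg _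
  have hrb : -b < r := by nlinarith
  have hrb2 : b < r := by nlinarith
  have ha' : a ≠ 0 := ne_of_lt ha
  set x₀ : ℝ := (b + r) / (-2 * a) with hx₀def
  have h2a : (0:ℝ) < -2 * a := by linarith
  have hx₀ : 0 < x₀ := div_pos (by linarith) h2a
  have he : (-2 * a) * x₀ = b + r := by
    rw [hx₀def]; field_simp
  have hroot : a * x₀ ^ 2 + b * x₀ + c = 0 := by
    have h4 : (4 * a) * (a * x₀ ^ 2 + b * x₀ + c) = 0 := by
      linear_combination (-2 * a * x₀ - b + r) * he + hr2
    have h4a : (4 : ℝ) * a ≠ 0 := by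
      intro hh; nlinarith
    rcases mul_eq_zero.mp h4 with h | h
    · exact absurd h h4a
    · exact h
  refine ⟨x₀, ⟨hx₀, hroot⟩, ?_⟩
  rintro y ⟨hy, hy0⟩
  have hf : (y - x₀) * (a * (y + x₀) + b) = 0 := by linear_combination hy0 - hroot
  have hax : a * x₀ + b = (b - r) / 2 := by
    have h2 : 2 * (a * x₀ + b) = b - r := by linear_combination (-1 : ℝ) * he
    linarith
  have hneg : a * (y + x₀) + b < 0 := by
    have : a * y < 0 := mul_neg_of_neg_of_pos ha hy
    have hbr : (b - r) / 2 < 0 := by linarith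
    nlinarith
  rcases mul_eq_zero.mp hf with h | h
  · linarith
  · exact absurd h (ne_of_lt hneg)

/-- If `s + q (T_max/r_I)(r_I - δ) > 0` then `h₂` has exactly one positive
real root. -/
theorem hcv_h2_unique_positive_root
    (s rT rI dT dI Tmax β p q c η ε : ℝ)
    (hs : 0 < s) (hrT : 0 < rT) (hrI : 0 < rI) (hdT : 0 < dT) (hdI : 0 < dI)
    (hTmax : 0 < Tmax) (hβ : 0 < β) (hp : 0 < p) (hq : 0 < q) (hc : 0 < c)
    (hη : η ∈ Set.Ico (0 : ℝ) 1) (hε : ε ∈ Set.Ico (0 : ℝ) 1)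
    (hrIT : rI ≤ rT) (hsT : s ≤ dT * Tmax) (hdTI : dT ≤ dI)
    (hpos : 0 < s + q * (Tmax / rI) * (rI - (dI + q))) :
    ∃! T : ℝ, 0 < T ∧ hcvH2 s rT rI dT dI Tmax β p q c η ε T = 0 := by
  set A : ℝ := (1 - ε) * (1 - η) * β * p * Tmax / c with hAdef
  have hA : 0 < A := by
    apply div_pos _ hc
    have h1 : 0 < 1 - ε := by linarith [hε.2]
    have h2 : 0 < 1 - η := by linarith [hη.2]
    positivity
  set a : ℝ := -((rT / Tmax) * (A ^ 2 / (rI * rT) + A / rI - A / rT)) with hadef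
  set b : ℝ := rT - (dT + q) - (rT / rI) * (rI - (dI + q))
      - (A / rI) * (rI - (dI + q)) + A * q / rI with hbdef
  set c₀ : ℝ := s + q * (Tmax / rI) * (rI - (dI + q)) with hc₀def
  have ha : a < 0 := by
    have key : A ^ 2 / (rI * rT) + A / rI - A / rT = A * (A + (rT - rI)) / (rI * rT) := by
      field_simp; ring
    have hk : 0 < A * (A + (rT - rI)) / (rI * rT) := by
      apply div_pos _ (mul_pos hrI hrT)
      have : 0 < A + (rT - rI) := by linarith
      exact mul_pos hA this
    rw [hadef, key]
    have : 0 < rT / Tmax := div_pos hrT hTmax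
    nlinarith
  obtain ⟨x, ⟨hx1, hx2⟩, hxu⟩ := quad_unique_pos a b c₀ ha hpos
  have heq : ∀ T : ℝ, hcvH2 s rT rI dT dI Tmax β p q c η ε T = a * T ^ 2 + b * T + c₀ := by
    intro T
    rw [hcvH2, hadef, hbdef, hc₀def, hAdef]
    ring
  refine ⟨x, ⟨hx1, by rw [heq]; exact hx2⟩, ?_⟩
  rintro y ⟨hy1, hy2⟩
  exact hxu y ⟨hy1, by rw [heq] at hy2; exact hy2⟩
end

section
/- Let (T*, I*, V*) be an equilibrium of the HCV system with T* > 0 and I* > 0. Then V* = (1-ε)·p·I*/c, I* = ((1-θ)·β·p·T_max/(c·r_I) - 1)·T* + (T_max/r_I)·(r_I - δ), and T* is a root of the quadratic h₂, i.e. h₂(T*) = 0. -/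
open Set

/-- `(T, I, V)` is an equilibrium point of the HCV system. -/
def hcvEquil (s rT rI dT dI Tmax β p q c η ε : ℝ) (T I V : ℝ) : Prop :=
  s + rT * T * (1 - (T + I) / Tmax) - dT * T - (1 - η) * β * V * T + q * I = 0 ∧
  rI * I * (1 - (T + I) / Tmax) + (1 - η) * β * V * T - dI * I - q * I = 0 ∧
  (1 - ε) * p * I - c * V = 0

namespace hcvEquil

variable {s rT rI dT dI Tmax β p q c η ε T I V : ℝ}

theorem virus_eq (hc : c ≠ 0) (h : hcvEquil s rT rI dT dI Tmax β p q c η ε T I V) :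
    V = (1 - ε) * p * I / c := by
  rw [eq_div_iff hc]
  linarith [h.2.2]

/-- The `I`-equation with `V` eliminated, denominators cleared and the factor `I` cancelled. -/
theorem infected_balance (hc : c ≠ 0) (hTmax : Tmax ≠ 0) (hI : I ≠ 0)
    (h : hcvEquil s rT rI dT dI Tmax β p q c η ε T I V) :
    rI * (Tmax - (T + I)) * c + (1 - ε) * (1 - η) * β * p * T * Tmax
      - (dI + q) * Tmax * c = 0 := by
  have hI' := h.2.1
  rw [h.virus_eq hc] at hI'
  field_simp at hI'
  have hfactored : I * (rI * (Tmax - (T + I)) * c + (1 - ε) * (1 - η) * β * p * T * Tmax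
      - (dI + q) * Tmax * c) = 0 := by
    linear_combination hI'
  exact (mul_eq_zero.mp hfactored).resolve_left hI

theorem infected_eq (hc : c ≠ 0) (hTmax : Tmax ≠ 0) (hrI : rI ≠ 0) (hI : I ≠ 0)
    (h : hcvEquil s rT rI dT dI Tmax β p q c η ε T I V) :
    I = ((1 - ε) * (1 - η) * β * p * Tmax / (c * rI) - 1) * T
      + (Tmax / rI) * (rI - (dI + q)) := by
  field_simp
  linear_combination -h.infected_balance hc hTmax hI

theorem hcvH2_eq_zero (hc : c ≠ 0) (hTmax : Tmax ≠ 0) (hrI : rI ≠ 0) (hrT : rT ≠ 0)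
    (hI : I ≠ 0) (h : hcvEquil s rT rI dT dI Tmax β p q c η ε T I V) :
    hcvH2 s rT rI dT dI Tmax β p q c η ε T = 0 := by
  have hbalance := h.infected_balance hc hTmax hI
  have hT := h.1
  rw [h.virus_eq hc] at hT
  field_simp at hT
  unfold hcvH2
  field_simp
  apply mul_left_cancel₀ hTmax
  -- In `rI * hT`, `hbalance` first replaces the logistic factor and then, being linear in `I`,
  -- eliminates `I`.
  linear_combination (c * rI) * hT
    - (c * rT * T - Tmax * (q * c - (1 - ε) * (1 - η) * β * p * T)) * hbalance

end hcvEquil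

theorem hcv_infected_equilibrium_relations_general
    (s rT rI dT dI Tmax β p q c η ε : ℝ)
    (hrT : 0 < rT) (hrI : 0 < rI)
    (hTmax : 0 < Tmax) (hc : 0 < c)
    (Ts Is Vs : ℝ) (hIs : 0 < Is)
    (heq : hcvEquil s rT rI dT dI Tmax β p q c η ε Ts Is Vs) :
    Vs = (1 - ε) * p * Is / c ∧
    Is = ((1 - ε) * (1 - η) * β * p * Tmax / (c * rI) - 1) * Ts
          + (Tmax / rI) * (rI - (dI + q)) ∧
    hcvH2 s rT rI dT dI Tmax β p q c η ε Ts = 0 :=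
  ⟨heq.virus_eq hc.ne', heq.infected_eq hc.ne' hTmax.ne' hrI.ne' hIs.ne',
    heq.hcvH2_eq_zero hc.ne' hTmax.ne' hrI.ne' hrT.ne' hIs.ne'⟩

/-- At any infected equilibrium, `V* = (1-ε)pI*/c`,
`I* = ((1-θ)βpT_max/(c r_I) - 1)T* + (T_max/r_I)(r_I - δ)` and `h₂(T*) = 0`. -/
theorem hcv_infected_equilibrium_relations
    (s rT rI dT dI Tmax β p q c η ε : ℝ)
    (hs : 0 < s) (hrT : 0 < rT) (hrI : 0 < rI) (hdT : 0 < dT) (hdI : 0 < dI)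
    (hTmax : 0 < Tmax) (hβ : 0 < β) (hp : 0 < p) (hq : 0 < q) (hc : 0 < c)
    (hη : η ∈ Set.Ico (0 : ℝ) 1) (hε : ε ∈ Set.Ico (0 : ℝ) 1)
    (hrIT : rI ≤ rT) (hsT : s ≤ dT * Tmax) (hdTI : dT ≤ dI)
    (Ts Is Vs : ℝ) (hTs : 0 < Ts) (hIs : 0 < Is)
    (heq : hcvEquil s rT rI dT dI Tmax β p q c η ε Ts Is Vs) :
    Vs = (1 - ε) * p * Is / c ∧
    Is = ((1 - ε) * (1 - η) * β * p * Tmax / (c * rI) - 1) * Ts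
          + (Tmax / rI) * (rI - (dI + q)) ∧
    hcvH2 s rT rI dT dI Tmax β p q c η ε Ts = 0 :=
  hcv_infected_equilibrium_relations_general s rT rI dT dI Tmax β p q c η ε hrT hrI hTmax hc Ts Is
    Vs hIs heq
end
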